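/- The sequence a_n := E[X*_n] is subadditive: a_{n+m} ≤ a_n + a_m for all n, m ≥ 1, where X*_n = max_{0≤j≤n} X_{n,j} is the maximum number of runs of 1's during the random insertion process on n positions. Consequently lim_{n→∞} a_n/n exists and equals inf_n a_n/n. -/

import Mathlib

/-- Number of maximal runs of 1's in the (1-indexed) sequence `f 1, …, f n`. -/
def numRuns (n : ℕ) (f : ℕ → ℕ) : ℕ :=
  ((Finset.Icc 1 n).filter (fun k => f k = 1 ∧ (k = 1 ∨ f (k - 1) = 0))).card

/-- The indicator sequence `I_m(k) = 1{σ⁻¹(k) ≤ m}` (1-indexed). -/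
def permInd (n m : ℕ) (σ : Equiv.Perm (Fin n)) : ℕ → ℕ :=
  fun k => if h : 1 ≤ k ∧ k ≤ n then
    (if ((σ.symm ⟨k - 1, by omega⟩ : Fin n) : ℕ) + 1 ≤ m then 1 else 0) else 0

/-- The running maximum `X*_n = max_{0 ≤ m ≤ n} X_{n,m}`. -/
def Xstar (n : ℕ) (σ : Equiv.Perm (Fin n)) : ℕ :=
  (Finset.range (n + 1)).sup (fun m => numRuns n (permInd n m σ))

/-- `a n = E[X*_n]`, the expected maximal number of runs for a uniformly random
permutation of {1,…,n}. -/
noncomputable def a (n : ℕ) : ℝ :=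
  (∑ σ : Equiv.Perm (Fin n), (Xstar n σ : ℝ)) / (Fintype.card (Equiv.Perm (Fin n)) : ℝ)

set_option maxHeartbeats 1000000

/-- downward-closed subsets of `Fin n` are initial segments -/
lemma downclosed {n : ℕ} (S : Finset (Fin n))
    (h : ∀ a b : Fin n, a ≤ b → b ∈ S → a ∈ S) (r : Fin n) :
    r ∈ S ↔ (r : ℕ) < S.card := by
  constructor
  · intro hr
    have hsub : Finset.Iic r ⊆ S := fun a ha => h a r (Finset.mem_Iic.mp ha) hr
    have := Finset.card_le_card hsub
    rw [Fin.card_Iic] at this; omega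
  · intro hr
    by_contra hrS
    have hsub : S ⊆ Finset.Iio r := by
      intro b hb
      rw [Finset.mem_Iio]
      by_contra hbr
      exact hrS (h r b (not_lt.mp hbr) hb)
    have := Finset.card_le_card hsub
    rw [Fin.card_Iio] at this; omega

lemma compl_card {n m : ℕ} {T : Finset (Fin (n + m))} (hT : T.card = n) :
    Tᶜ.card = m := by
  rw [Finset.card_compl, hT, Fintype.card_fin]; omega

/-- the "riffle shuffle" map: value `v ↦` the time at which `v` is inserted. -/
def shufFun (n m : ℕ) (T : Finset (Fin (n + m))) (hT : T.card = n)
    (τ : Equiv.Perm (Fin n)) (ρ : Equiv.Perm (Fin m)) : Fin (n + m) → Fin (n + m) := fun v =>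
  if h : (v : ℕ) < n then ((T.orderIsoOfFin hT) (τ.symm ⟨v, h⟩) : Fin (n + m))
  else ((Tᶜ.orderIsoOfFin (compl_card hT)) (ρ.symm ⟨(v : ℕ) - n, by have := v.isLt; omega⟩) :
    Fin (n + m))

lemma shufFun_inj (n m : ℕ) (T : Finset (Fin (n + m))) (hT : T.card = n)
    (τ : Equiv.Perm (Fin n)) (ρ : Equiv.Perm (Fin m)) :
    Function.Injective (shufFun n m T hT τ ρ) := by
  intro v w hvw
  unfold shufFun at hvw
  by_cases hv : (v : ℕ) < n <;> by_cases hw : (w : ℕ) < n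
  · rw [dif_pos hv, dif_pos hw] at hvw
    have h1 : (T.orderIsoOfFin hT) (τ.symm ⟨v, hv⟩) = (T.orderIsoOfFin hT) (τ.symm ⟨w, hw⟩) :=
      Subtype.coe_injective hvw
    have h2 := τ.symm.injective ((T.orderIsoOfFin hT).injective h1)
    injection h2 with h3
    exact Fin.ext h3
  · rw [dif_pos hv, dif_neg hw] at hvw
    exfalso
    have h1 : (((T.orderIsoOfFin hT) (τ.symm ⟨v, hv⟩) : Fin (n + m))) ∈ T :=
      ((T.orderIsoOfFin hT) (τ.symm ⟨v, hv⟩)).prop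
    have h2 : (((Tᶜ.orderIsoOfFin (compl_card hT)) (ρ.symm ⟨(w : ℕ) - n, by have := w.isLt; omega⟩) : Fin (n + m))) ∈ Tᶜ :=
      ((Tᶜ.orderIsoOfFin (compl_card hT)) _).prop
    rw [hvw] at h1
    exact (Finset.mem_compl.mp h2) h1
  · rw [dif_neg hv, dif_pos hw] at hvw
    exfalso
    have h1 : (((T.orderIsoOfFin hT) (τ.symm ⟨w, hw⟩) : Fin (n + m))) ∈ T :=
      ((T.orderIsoOfFin hT) (τ.symm ⟨w, hw⟩)).prop
    have h2 : (((Tᶜ.orderIsoOfFin (compl_card hT)) (ρ.symm ⟨(v : ℕ) - n, by have := v.isLt; omega⟩) : Fin (n + m))) ∈ Tᶜ :=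
      ((Tᶜ.orderIsoOfFin (compl_card hT)) _).prop
    rw [← hvw] at h1
    exact (Finset.mem_compl.mp h2) h1
  · rw [dif_neg hv, dif_neg hw] at hvw
    have h1 := Subtype.coe_injective hvw
    have h2 := ρ.symm.injective ((Tᶜ.orderIsoOfFin (compl_card hT)).injective h1)
    injection h2 with h3
    exact Fin.ext (by omega)

/-- the shuffle permutation: time `t ↦` value inserted at time `t`. -/
noncomputable def shuf (n m : ℕ) (T : Finset (Fin (n + m))) (hT : T.card = n)
    (τ : Equiv.Perm (Fin n)) (ρ : Equiv.Perm (Fin m)) : Equiv.Perm (Fin (n + m)) :=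
  (Equiv.ofBijective _ (Finite.injective_iff_bijective.mp (shufFun_inj n m T hT τ ρ))).symm

lemma shuf_symm_apply (n m : ℕ) (T : Finset (Fin (n + m))) (hT : T.card = n)
    (τ : Equiv.Perm (Fin n)) (ρ : Equiv.Perm (Fin m)) (v : Fin (n + m)) :
    (shuf n m T hT τ ρ).symm v = shufFun n m T hT τ ρ v := rfl


lemma shufFun_lt (n m : ℕ) (T : Finset (Fin (n + m))) (hT : T.card = n)
    (τ : Equiv.Perm (Fin n)) (ρ : Equiv.Perm (Fin m)) (v : Fin (n + m)) (h : (v : ℕ) < n) :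
    shufFun n m T hT τ ρ v = ((T.orderIsoOfFin hT) (τ.symm ⟨v, h⟩) : Fin (n + m)) := dif_pos h

lemma shufFun_ge (n m : ℕ) (T : Finset (Fin (n + m))) (hT : T.card = n)
    (τ : Equiv.Perm (Fin n)) (ρ : Equiv.Perm (Fin m)) (v : Fin (n + m)) (h : ¬ (v : ℕ) < n) :
    shufFun n m T hT τ ρ v = ((Tᶜ.orderIsoOfFin (compl_card hT))
      (ρ.symm ⟨(v : ℕ) - n, by have := v.isLt; omega⟩) : Fin (n + m)) := dif_neg h

lemma Xstar_shuf_le (n m : ℕ) (T : Finset (Fin (n + m))) (hT : T.card = n)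
    (τ : Equiv.Perm (Fin n)) (ρ : Equiv.Perm (Fin m)) :
    Xstar (n + m) (shuf n m T hT τ ρ) ≤ Xstar n τ + Xstar m ρ := by
  apply Finset.sup_le
  intro j hj
  set σ := shuf n m T hT τ ρ with hσ
  set eA := T.orderIsoOfFin hT with heA
  set eB := Tᶜ.orderIsoOfFin (compl_card hT) with heB
  set jA := (Finset.univ.filter fun r : Fin n => ((eA r : Fin (n + m)) : ℕ) < j).card with hjA
  set jB := (Finset.univ.filter fun r : Fin m => ((eB r : Fin (n + m)) : ℕ) < j).card with hjB
  have hjAn : jA ≤ n := le_trans (Finset.card_filter_le _ _) (by simp)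
  have hjBm : jB ≤ m := le_trans (Finset.card_filter_le _ _) (by simp)
  have enumA : ∀ r : Fin n, ((eA r : Fin (n + m)) : ℕ) < j ↔ (r : ℕ) < jA := by
    intro r
    rw [hjA, ← downclosed _ _ r]
    · simp
    · intro x y hxy hy
      simp only [Finset.mem_filter, Finset.mem_univ, true_and] at hy ⊢
      have h1 : (eA x : Fin (n + m)) ≤ (eA y : Fin (n + m)) := Subtype.coe_le_coe.mpr (eA.monotone hxy)
      exact lt_of_le_of_lt h1 hy
  have enumB : ∀ r : Fin m, ((eB r : Fin (n + m)) : ℕ) < j ↔ (r : ℕ) < jB := by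
    intro r
    rw [hjB, ← downclosed _ _ r]
    · simp
    · intro x y hxy hy
      simp only [Finset.mem_filter, Finset.mem_univ, true_and] at hy ⊢
      have h1 : (eB x : Fin (n + m)) ≤ (eB y : Fin (n + m)) := Subtype.coe_le_coe.mpr (eB.monotone hxy)
      exact lt_of_le_of_lt h1 hy
  have hA : ∀ k, 1 ≤ k → k ≤ n → permInd (n + m) j σ k = permInd n jA τ k := by
    intro k hk1 hkn
    rw [permInd, permInd, dif_pos ⟨hk1, by omega⟩, dif_pos ⟨hk1, hkn⟩]
    have e1 : σ.symm ⟨k - 1, by omega⟩ = shufFun n m T hT τ ρ ⟨k - 1, by omega⟩ := rfl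
    have hlt : ((⟨k - 1, by omega⟩ : Fin (n + m)) : ℕ) < n := by show k - 1 < n; omega
    rw [e1, shufFun_lt n m T hT τ ρ _ hlt]
    refine if_congr ?_ rfl rfl
    simp only [Nat.add_one_le_iff]
    exact enumA _
  have hB : ∀ k, n + 1 ≤ k → k ≤ n + m → permInd (n + m) j σ k = permInd m jB ρ (k - n) := by
    intro k hk1 hkm
    rw [permInd, permInd, dif_pos ⟨by omega, by omega⟩, dif_pos ⟨by omega, by omega⟩]
    have e1 : σ.symm ⟨k - 1, by omega⟩ = shufFun n m T hT τ ρ ⟨k - 1, by omega⟩ := rfl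
    have hlt : ¬ ((⟨k - 1, by omega⟩ : Fin (n + m)) : ℕ) < n := by show ¬ k - 1 < n; omega
    rw [e1, shufFun_ge n m T hT τ ρ _ hlt]
    have e2 : (⟨((⟨k - 1, by omega⟩ : Fin (n + m)) : ℕ) - n,
        by show k - 1 - n < m; omega⟩ : Fin m) = ⟨k - n - 1, by omega⟩ := by
      apply Fin.ext; show k - 1 - n = k - n - 1; omega
    rw [e2]
    refine if_congr ?_ rfl rfl
    simp only [Nat.add_one_le_iff]
    exact enumB _
  have key : numRuns (n + m) (permInd (n + m) j σ) ≤
      numRuns n (permInd n jA τ) + numRuns m (permInd m jB ρ) := by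
    rw [numRuns]
    have hsplit : Finset.Icc 1 (n + m) = Finset.Icc 1 n ∪ Finset.Icc (n + 1) (n + m) := by
      ext k; simp only [Finset.mem_Icc, Finset.mem_union]; omega
    rw [hsplit, Finset.filter_union]
    refine le_trans (Finset.card_union_le _ _) (add_le_add ?_ ?_)
    · have part1 : ((Finset.Icc 1 n).filter
          (fun k => permInd (n + m) j σ k = 1 ∧ (k = 1 ∨ permInd (n + m) j σ (k - 1) = 0))) =
          ((Finset.Icc 1 n).filter
          (fun k => permInd n jA τ k = 1 ∧ (k = 1 ∨ permInd n jA τ (k - 1) = 0))) := by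
        apply Finset.filter_congr
        intro k hk
        rw [Finset.mem_Icc] at hk
        rw [hA k hk.1 hk.2]
        rcases eq_or_lt_of_le hk.1 with h1 | h1
        · simp [← h1]
        · rw [hA (k - 1) (by omega) (by omega)]
      rw [part1, numRuns]
    · rw [numRuns]
      apply Finset.card_le_card_of_injOn (fun k => k - n)
      · intro k hk
        simp only [Finset.mem_coe, Finset.mem_filter, Finset.mem_Icc] at hk ⊢
        obtain ⟨⟨hk1, hk2⟩, hf1, hf2⟩ := hk
        refine ⟨⟨by omega, by omega⟩, ?_, ?_⟩
        · rw [← hB k hk1 hk2]; exact hf1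
        · rcases Nat.eq_or_lt_of_le hk1 with h1 | h1
          · left; omega
          · right
            have h0 : permInd (n + m) j σ (k - 1) = 0 := by
              rcases hf2 with h | h; · omega
              · exact h
            have e3 : k - n - 1 = (k - 1) - n := by omega
            rw [e3, ← hB (k - 1) (by omega) (by omega)]
            exact h0
      · intro x hx y hy hxy
        simp only [Finset.coe_filter, Set.mem_setOf_eq, Finset.mem_Icc] at hx hy
        have h1 : x - n = y - n := hxy
        omega
  refine le_trans key (add_le_add ?_ ?_)
  · rw [Xstar]
    exact Finset.le_sup (f := fun m2 => numRuns n (permInd n m2 τ)) (b := jA)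
      (Finset.mem_range.mpr (by omega))
  · rw [Xstar]
    exact Finset.le_sup (f := fun m2 => numRuns m (permInd m m2 ρ)) (b := jB)
      (Finset.mem_range.mpr (by omega))

lemma T_eq_image (n m : ℕ) (T : Finset (Fin (n + m))) (hT : T.card = n)
    (τ : Equiv.Perm (Fin n)) (ρ : Equiv.Perm (Fin m)) :
    T = Finset.image (fun r : Fin n =>
      shufFun n m T hT τ ρ ⟨(r : ℕ), by have := r.isLt; omega⟩) Finset.univ := by
  have hinj : Function.Injective (fun r : Fin n =>
      shufFun n m T hT τ ρ ⟨(r : ℕ), by have := r.isLt; omega⟩) := by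
    intro x y hxy
    have := shufFun_inj n m T hT τ ρ hxy
    injection this with h
    exact Fin.ext h
  have hsub : Finset.image (fun r : Fin n =>
      shufFun n m T hT τ ρ ⟨(r : ℕ), by have := r.isLt; omega⟩) Finset.univ ⊆ T := by
    intro t ht
    rw [Finset.mem_image] at ht
    obtain ⟨r, -, rfl⟩ := ht
    rw [shufFun_lt n m T hT τ ρ _ (by show (r : ℕ) < n; exact r.isLt)]
    exact Subtype.coe_prop _
  have hcard : T.card ≤ (Finset.image (fun r : Fin n =>
      shufFun n m T hT τ ρ ⟨(r : ℕ), by have := r.isLt; omega⟩) Finset.univ).card := by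
    rw [Finset.card_image_of_injective _ hinj, Finset.card_univ, Fintype.card_fin, hT]
  exact (Finset.eq_of_subset_of_card_le hsub hcard).symm

lemma phi_inj (n m : ℕ) : Function.Injective
    (fun p : {T : Finset (Fin (n + m)) // T.card = n} ×
        Equiv.Perm (Fin n) × Equiv.Perm (Fin m) => shuf n m p.1.1 p.1.2 p.2.1 p.2.2) := by
  rintro ⟨⟨T, hT⟩, τ, ρ⟩ ⟨⟨T', hT'⟩, τ', ρ'⟩ h
  simp only at h
  have hfun : shufFun n m T hT τ ρ = shufFun n m T' hT' τ' ρ' := by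
    funext v
    rw [← shuf_symm_apply n m T hT τ ρ v, ← shuf_symm_apply n m T' hT' τ' ρ' v, h]
  have hTT : T = T' := by
    rw [T_eq_image n m T hT τ ρ, T_eq_image n m T' hT' τ' ρ']
    congr 1
    funext r
    rw [hfun]
  subst hTT
  have hτ : τ = τ' := by
    have hs : ∀ x : Fin n, τ.symm x = τ'.symm x := by
      intro x
      have hv := congrFun hfun ⟨(x : ℕ), by have := x.isLt; omega⟩
      have hlt : ((⟨(x : ℕ), by have := x.isLt; omega⟩ : Fin (n + m)) : ℕ) < n := x.isLt
      rw [shufFun_lt n m T hT τ ρ _ hlt, shufFun_lt n m T hT' τ' ρ' _ hlt] at hv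
      have h2 := Subtype.coe_injective hv
      have h3 : τ.symm ⟨(x : ℕ), x.isLt⟩ = τ'.symm ⟨(x : ℕ), x.isLt⟩ :=
        (T.orderIsoOfFin hT).injective h2
      exact h3
    have h4 : τ.symm = τ'.symm := Equiv.ext hs
    have h5 := congrArg Equiv.symm h4
    simpa using h5
  have hρ : ρ = ρ' := by
    have hs : ∀ x : Fin m, ρ.symm x = ρ'.symm x := by
      intro x
      have hv := congrFun hfun ⟨n + (x : ℕ), by have := x.isLt; omega⟩
      have hlt : ¬ ((⟨n + (x : ℕ), by have := x.isLt; omega⟩ : Fin (n + m)) : ℕ) < n := by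
        show ¬ n + (x : ℕ) < n; omega
      rw [shufFun_ge n m T hT τ ρ _ hlt, shufFun_ge n m T hT' τ' ρ' _ hlt] at hv
      have h2 := Subtype.coe_injective hv
      have h3 : ρ.symm ⟨n + (x : ℕ) - n, by have := x.isLt; omega⟩ =
          ρ'.symm ⟨n + (x : ℕ) - n, by have := x.isLt; omega⟩ :=
        (Tᶜ.orderIsoOfFin (compl_card hT)).injective h2
      have e : (⟨n + (x : ℕ) - n, by have := x.isLt; omega⟩ : Fin m) = x :=
        Fin.ext (by show n + (x : ℕ) - n = (x : ℕ); omega)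
      rwa [e] at h3
    have h4 : ρ.symm = ρ'.symm := Equiv.ext hs
    have h5 := congrArg Equiv.symm h4
    simpa using h5
  simp [hτ, hρ]

lemma phi_card (n m : ℕ) :
    Fintype.card ({T : Finset (Fin (n + m)) // T.card = n} ×
      Equiv.Perm (Fin n) × Equiv.Perm (Fin m)) =
    Fintype.card (Equiv.Perm (Fin (n + m))) := by
  rw [Fintype.card_prod, Fintype.card_prod, Fintype.card_finset_len, Fintype.card_perm,
    Fintype.card_perm, Fintype.card_perm, Fintype.card_fin, Fintype.card_fin, Fintype.card_fin]
  have h := Nat.choose_mul_factorial_mul_factorial (Nat.le_add_right n m)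
  rw [Nat.add_sub_cancel_left] at h
  rw [← h]; ring

lemma a_subadd (n m : ℕ) : a (n + m) ≤ a n + a m := by
  classical
  set Sn := ∑ τ : Equiv.Perm (Fin n), (Xstar n τ : ℝ) with hSn
  set Sm := ∑ ρ : Equiv.Perm (Fin m), (Xstar m ρ : ℝ) with hSm
  let Φ : {T : Finset (Fin (n + m)) // T.card = n} ×
      Equiv.Perm (Fin n) × Equiv.Perm (Fin m) → Equiv.Perm (Fin (n + m)) :=
    fun p => shuf n m p.1.1 p.1.2 p.2.1 p.2.2
  have hbij : Function.Bijective Φ :=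
    (Fintype.bijective_iff_injective_and_card Φ).mpr ⟨phi_inj n m, phi_card n m⟩
  have hsum : ∑ σ : Equiv.Perm (Fin (n + m)), (Xstar (n + m) σ : ℝ)
      = ∑ p : {T : Finset (Fin (n + m)) // T.card = n} ×
          Equiv.Perm (Fin n) × Equiv.Perm (Fin m), (Xstar (n + m) (Φ p) : ℝ) :=
    (Fintype.sum_bijective Φ hbij _ _ (fun p => rfl)).symm
  have hle : ∑ p : {T : Finset (Fin (n + m)) // T.card = n} ×
        Equiv.Perm (Fin n) × Equiv.Perm (Fin m), (Xstar (n + m) (Φ p) : ℝ)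
      ≤ ∑ p : {T : Finset (Fin (n + m)) // T.card = n} ×
        Equiv.Perm (Fin n) × Equiv.Perm (Fin m),
        ((Xstar n p.2.1 : ℝ) + (Xstar m p.2.2 : ℝ)) := by
    apply Finset.sum_le_sum
    intro p _
    have := Xstar_shuf_le n m p.1.1 p.1.2 p.2.1 p.2.2
    have h2 : (Xstar (n + m) (Φ p) : ℝ) ≤ ((Xstar n p.2.1 + Xstar m p.2.2 : ℕ) : ℝ) := by
      exact_mod_cast this
    rw [Nat.cast_add] at h2
    exact h2
  have hsplit : ∑ p : {T : Finset (Fin (n + m)) // T.card = n} ×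
        Equiv.Perm (Fin n) × Equiv.Perm (Fin m),
        ((Xstar n p.2.1 : ℝ) + (Xstar m p.2.2 : ℝ))
      = (Fintype.card {T : Finset (Fin (n + m)) // T.card = n} : ℝ) *
        ((Fintype.card (Equiv.Perm (Fin m)) : ℝ) * Sn
          + (Fintype.card (Equiv.Perm (Fin n)) : ℝ) * Sm) := by
    simp only [Fintype.sum_prod_type]
    simp only [Finset.sum_add_distrib, Finset.sum_const, Finset.card_univ, nsmul_eq_mul]
    simp only [← Finset.mul_sum]
    rw [← hSn, ← hSm]
    ring
  have hcP : ∀ k : ℕ, (Fintype.card (Equiv.Perm (Fin k)) : ℝ) = (Nat.factorial k : ℝ) := by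
    intro k; rw [Fintype.card_perm, Fintype.card_fin]
  have hcS : (Fintype.card {T : Finset (Fin (n + m)) // T.card = n} : ℝ)
      = (((n + m).choose n : ℕ) : ℝ) := by
    rw [Fintype.card_finset_len, Fintype.card_fin]
  have hfact : (((n + m).factorial : ℕ) : ℝ)
      = (((n + m).choose n : ℕ) : ℝ) * (Nat.factorial n : ℝ) * (Nat.factorial m : ℝ) := by
    have h := Nat.choose_mul_factorial_mul_factorial (Nat.le_add_right n m)
    rw [Nat.add_sub_cancel_left] at h
    exact_mod_cast h.symm
  have hApos : (0 : ℝ) < (Nat.factorial n : ℝ) := by exact_mod_cast n.factorial_pos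
  have hBpos : (0 : ℝ) < (Nat.factorial m : ℝ) := by exact_mod_cast m.factorial_pos
  have hCpos : (0 : ℝ) < (((n + m).choose n : ℕ) : ℝ) := by
    exact_mod_cast Nat.choose_pos (Nat.le_add_right n m)
  rw [a, a, a, hcP, hcP, hcP]
  calc (∑ σ : Equiv.Perm (Fin (n + m)), (Xstar (n + m) σ : ℝ)) / ((n + m).factorial : ℝ)
      ≤ ((((n + m).choose n : ℕ) : ℝ) * ((Nat.factorial m : ℝ) * Sn
          + (Nat.factorial n : ℝ) * Sm)) / ((n + m).factorial : ℝ) := by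
        apply div_le_div_of_nonneg_right ?_ ?_ |>.trans_eq rfl
        · rw [hsum]
          refine hle.trans (le_of_eq ?_)
          rw [hsplit, hcS, hcP, hcP]
        · positivity
    _ = Sn / (Nat.factorial n : ℝ) + Sm / (Nat.factorial m : ℝ) := by
        rw [hfact]
        field_simp

theorem stmt7 :
    (∀ n m : ℕ, 1 ≤ n → 1 ≤ m → a (n + m) ≤ a n + a m) ∧
    Filter.Tendsto (fun n : ℕ => a n / n) Filter.atTop
      (nhds (⨅ n : ℕ, a (n + 1) / ((n : ℝ) + 1))) := by
  have hnonneg : ∀ k : ℕ, 0 ≤ a k := by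
    intro k
    rw [a]
    apply div_nonneg
    · apply Finset.sum_nonneg; intro σ _; positivity
    · positivity
  have hsub : Subadditive a := fun p q => a_subadd p q
  have hbdd : BddBelow (Set.range fun k : ℕ => a k / k) := by
    refine ⟨0, ?_⟩
    rintro x ⟨k, rfl⟩
    exact div_nonneg (hnonneg k) (Nat.cast_nonneg k)
  have hlim : hsub.lim = ⨅ k : ℕ, a (k + 1) / ((k : ℝ) + 1) := by
    rw [Subadditive.lim, ← sInf_range]
    congr 1
    ext x
    simp only [Set.mem_image, Set.mem_Ici, Set.mem_range]
    constructor
    · rintro ⟨k, hk, rfl⟩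
      refine ⟨k - 1, ?_⟩
      have e : k - 1 + 1 = k := by omega
      rw [e]
      congr 1
      rw [Nat.cast_sub hk]
      norm_num
    · rintro ⟨k, rfl⟩
      refine ⟨k + 1, by omega, ?_⟩
      congr 1
      push_cast
      ring
  constructor
  · intro n m _ _; exact a_subadd n m
  · have h := hsub.tendsto_lim hbdd
    rwa [hlim] at h
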